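/- Let A, B, B', C, C' ∈ ℂ^{r×r} with C + nI and C' + nI invertible for all integers n ≥ 0, AB = BA, and B', C, C' pairwise commuting; let |x| + |y| < 1. (i) If A + kI is invertible for all integers k ≥ 0, then for every non-negative integer s: F₂(A+sI, B, B'; C, C'; x, y) = ∑_{k₁+k₂ ≤ s} (s!/(k₁! k₂! (s−k₁−k₂)!)) (B)_{k₁} x^{k₁} y^{k₂} ·[F₂(A+(k₁+k₂)I, B+k₁I, B'+k₂I; C+k₁I, C'+k₂I; x, y)]·(B')_{k₂}·(C)_{k₁}⁻¹·(C')_{k₂}⁻¹. (ii) If moreover A − kI is invertible for all integers 1 ≤ k ≤ s, then F₂(A−sI, B, B'; C, C'; x, y) = ∑_{k₁+k₂ ≤ s} (s!/(k₁! k₂! (s−k₁−k₂)!)) (B)_{k₁} (−x)^{k₁} (−y)^{k₂} ·[F₂(A, B+k₁I, B'+k₂I; C+k₁I, C'+k₂I; x, y)]·(B')_{k₂}·(C)_{k₁}⁻¹·(C')_{k₂}⁻¹. -/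

import Mathlib

/-- The shifted factorial (Pochhammer) matrix: `(A)_0 = I`, `(A)_{n+1} = (A)_n (A + nI)`. -/
noncomputable def mPoch {r : ℕ} (A : Matrix (Fin r) (Fin r) ℂ) : ℕ → Matrix (Fin r) (Fin r) ℂ
  | 0 => 1
  | n + 1 => mPoch A n * (A + (n : ℂ) • 1)

/-- The second Appell matrix function `F₂(A, B, B'; C, C'; x, y)`. -/
noncomputable def appellF2 {r : ℕ} (A B B' C C' : Matrix (Fin r) (Fin r) ℂ) (x y : ℂ) :
    Matrix (Fin r) (Fin r) ℂ :=
  ∑' p : ℕ × ℕ,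
    (((p.1.factorial : ℂ) * (p.2.factorial : ℂ))⁻¹ * x ^ p.1 * y ^ p.2) •
      (mPoch A (p.1 + p.2) * mPoch B p.1 * mPoch B' p.2 * (mPoch C p.1)⁻¹ * (mPoch C' p.2)⁻¹)

/-!
The contiguous relation `(X + 1)_M = (X)_M + M (X + 1)_{M-1}` with `M = m + n` says that
`G_s(k₁, k₂) = m^{(k₁)} n^{(k₂)} (A + s + k₁ + k₂)_{m+n-k₁-k₂}` (falling factorials `m^{(k)}`)
satisfies `G_{s+1} = (1 + S₁ + S₂) G_s` for the shifts `S₁, S₂` in `k₁, k₂`. Hence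
`(A + s)_{m+n} = ((1 + S₁ + S₂)^s G_0)(0, 0)` is a trinomial sum of the `G_0(k₁, k₂)`, and likewise
for `(A - s)_{m+n}` with signs. Put into the double series of `F₂`, the part carrying
`m^{(k₁)} n^{(k₂)}` becomes, after the reindexing `m ↦ m + k₁`, `n ↦ n + k₂`, the series of `F₂`
with shifted parameters, multiplied by `(B)_{k₁}` on the left and by
`(B')_{k₂} (C)_{k₁}⁻¹ (C')_{k₂}⁻¹` on the right; the commutation hypotheses allow the factors to be
moved into place. The series converge absolutely because `‖(A)_N‖ ≤ K θ^N N!` and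
`‖(B)_m‖ ‖(C)_m⁻¹‖ ≤ K θ^m` for every `θ > 1`, so the finite sums may be exchanged with the
double series.
-/

open Finset Filter

theorem Nat.descFactorial_succ_mul_add_mul_descFactorial_succ (m n k₁ k₂ : ℕ) :
    m.descFactorial (k₁ + 1) * n.descFactorial k₂ + m.descFactorial k₁ * n.descFactorial (k₂ + 1)
      = (m + n - k₁ - k₂) * (m.descFactorial k₁ * n.descFactorial k₂) := by
  rcases lt_or_ge m k₁ with h₁ | h₁
  · simp [Nat.descFactorial_eq_zero_iff_lt.2 h₁]
  rcases lt_or_ge n k₂ with h₂ | h₂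
  · simp [Nat.descFactorial_eq_zero_iff_lt.2 h₂]
  rw [Nat.descFactorial_succ, Nat.descFactorial_succ,
    show m + n - k₁ - k₂ = (m - k₁) + (n - k₂) by omega]
  ring

theorem Nat.cast_choose_mul_choose_eq_div {s k₁ k₂ : ℕ} (h : k₁ + k₂ ≤ s) :
    ((s.choose k₁ * (s - k₁).choose k₂ : ℕ) : ℂ) =
      s.factorial / (k₁.factorial * k₂.factorial * (s - k₁ - k₂).factorial) := by
  have : ((s - k₁).factorial : ℂ) ≠ 0 := Nat.cast_ne_zero.2 (Nat.factorial_ne_zero _)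
  rw [Nat.cast_mul, Nat.cast_choose ℂ (by omega : k₁ ≤ s),
    Nat.cast_choose ℂ (by omega : k₂ ≤ s - k₁)]
  field_simp

theorem add_le_of_mem_range_of_mem_range_sub {s k₁ k₂ : ℕ} (hk₁ : k₁ ∈ range (s + 1))
    (hk₂ : k₂ ∈ range (s + 1 - k₁)) : k₁ + k₂ ≤ s := by
  rw [mem_range] at hk₁ hk₂
  omega

open fwdDiff_aux in
/-- `Φ s = (S₁ + (S₂ + 1)) ^ s (Φ 0)` for the commuting shifts `S₁`, `S₂`; expand by the
binomial theorem twice. -/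
theorem eq_sum_choose_mul_choose_of_succ_eq {G : Type*} [AddCommGroup G] (Φ : ℕ → ℕ × ℕ → G)
    (h : ∀ s k, Φ (s + 1) k = Φ s k + Φ s (k + (1, 0)) + Φ s (k + (0, 1))) (s : ℕ) :
    Φ s 0 = ∑ k₁ ∈ range (s + 1), ∑ k₂ ∈ range (s + 1 - k₁),
      (s.choose k₁ * (s - k₁).choose k₂) • Φ 0 (k₁, k₂) := by
  set S₁ := shiftₗ (ℕ × ℕ) G (1, 0)
  set S₂ := shiftₗ (ℕ × ℕ) G (0, 1)
  have hΦ : ∀ s, Φ s = ((S₁ + (S₂ + 1)) ^ s) (Φ 0) := by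
    intro s
    induction s with
    | zero => rfl
    | succ s ih =>
      rw [pow_succ', Module.End.mul_apply, ← ih]
      ext k
      simp only [S₁, S₂, h, LinearMap.add_apply, Module.End.one_apply, Pi.add_apply, shiftₗ_apply]
      abel
  have hS : Commute S₁ (S₂ + 1) := by
    refine Commute.add_right ?_ (Commute.one_right _)
    ext f k
    simp [S₁, S₂, Module.End.mul_apply, shiftₗ_apply, add_right_comm]
  rw [hΦ, hS.add_pow, LinearMap.sum_apply, Finset.sum_apply]
  refine sum_congr rfl fun k₁ hk₁ => ?_
  rw [(Commute.one_right S₂).add_pow, mul_sum, sum_mul, LinearMap.sum_apply, Finset.sum_apply,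
    show s + 1 - k₁ = s - k₁ + 1 by have := mem_range.1 hk₁; omega]
  refine sum_congr rfl fun k₂ _ => ?_
  simp [S₁, S₂, Module.End.mul_apply, shiftₗ_pow_apply, mul_smul]

noncomputable def appellF2Term {r : ℕ} (A B B' C C' : Matrix (Fin r) (Fin r) ℂ) (x y : ℂ)
    (p : ℕ × ℕ) : Matrix (Fin r) (Fin r) ℂ :=
  (((p.1.factorial : ℂ) * (p.2.factorial : ℂ))⁻¹ * x ^ p.1 * y ^ p.2) •
    (mPoch A (p.1 + p.2) * mPoch B p.1 * mPoch B' p.2 * (mPoch C p.1)⁻¹ * (mPoch C' p.2)⁻¹)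

/-- The term of `x^{k₁} y^{k₂} ∂ₓ^{k₁} ∂_y^{k₂}` applied termwise to the series of `appellF2`,
except that the index of `(A)` is lowered by `k₁ + k₂`. -/
noncomputable def appellF2DiffTerm {r : ℕ} (A B B' C C' : Matrix (Fin r) (Fin r) ℂ) (x y : ℂ)
    (k₁ k₂ : ℕ) (q : ℕ × ℕ) : Matrix (Fin r) (Fin r) ℂ :=
  (((q.1.descFactorial k₁ * q.2.descFactorial k₂ : ℕ) : ℂ) *
      (((q.1.factorial : ℂ) * q.2.factorial)⁻¹ * x ^ q.1 * y ^ q.2)) •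
    (mPoch A (q.1 + q.2 - k₁ - k₂) * mPoch B q.1 * mPoch B' q.2 * (mPoch C q.1)⁻¹ *
      (mPoch C' q.2)⁻¹)

section

variable {r : ℕ}

local notation "Mat" => Matrix (Fin r) (Fin r) ℂ

theorem Commute.add_smul_one_right {X Y : Mat} (h : Commute X Y) (b : ℂ) :
    Commute X (Y + b • 1) :=
  h.add_right ((Commute.one_right X).smul_right b)

theorem Commute.mPoch_right {X Y : Mat} (h : Commute X Y) (j : ℕ) : Commute X (mPoch Y j) := by
  induction j with
  | zero => exact Commute.one_right X
  | succ j ih => exact ih.mul_right (h.add_smul_one_right _)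

theorem Commute.mPoch_mPoch {X Y : Mat} (h : Commute X Y) (i j : ℕ) :
    Commute (mPoch X i) (mPoch Y j) :=
  (h.symm.mPoch_right i).symm.mPoch_right j

theorem Commute.inv_right_of_isUnit {X M : Mat} (h : Commute X M) (hM : IsUnit M) :
    Commute X M⁻¹ := by
  simpa [Matrix.coe_units_inv] using h.units_inv_right (u := hM.unit)

theorem isUnit_add_natCast_smul_one {C : Mat} (hC : ∀ n : ℕ, IsUnit (C + (n : ℂ) • 1))
    (k n : ℕ) : IsUnit (C + (k : ℂ) • 1 + (n : ℂ) • 1) := by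
  simpa [add_assoc, ← add_smul] using hC (k + n)

theorem isUnit_mPoch {C : Mat} (hC : ∀ n : ℕ, IsUnit (C + (n : ℂ) • 1)) (m : ℕ) :
    IsUnit (mPoch C m) := by
  induction m with
  | zero => exact isUnit_one
  | succ m ih => exact ih.mul (hC m)

theorem mPoch_add (A : Mat) (k m : ℕ) :
    mPoch A (k + m) = mPoch A k * mPoch (A + (k : ℂ) • 1) m := by
  induction m with
  | zero => simp [mPoch]
  | succ m ih =>
    rw [← add_assoc, mPoch, mPoch, ih, mul_assoc, add_assoc, ← add_smul]
    push_cast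
    rfl

theorem mPoch_succ' (A : Mat) (m : ℕ) : mPoch A (m + 1) = A * mPoch (A + 1) m := by
  rw [add_comm, mPoch_add]
  simp [mPoch]

theorem mPoch_add_one (X : Mat) (M : ℕ) :
    mPoch (X + 1) M = mPoch X M + (M : ℂ) • mPoch (X + 1) (M - 1) := by
  cases M with
  | zero => simp [mPoch]
  | succ M =>
    have hc : Commute X (mPoch (X + 1) M) :=
      ((Commute.refl X).add_right (Commute.one_right X)).mPoch_right M
    rw [Nat.add_sub_cancel, mPoch, mPoch_succ', hc.eq]
    push_cast
    simp only [mul_add, add_smul, one_smul, mul_one, Matrix.mul_smul]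
    abel

theorem mPoch_add_natCast_smul_eq_sum (A : Mat) (s m n : ℕ) :
    mPoch (A + (s : ℂ) • 1) (m + n) =
      ∑ k₁ ∈ range (s + 1), ∑ k₂ ∈ range (s + 1 - k₁),
        ((s.choose k₁ * (s - k₁).choose k₂ : ℕ) : ℂ) •
          (((m.descFactorial k₁ * n.descFactorial k₂ : ℕ) : ℂ) •
            mPoch (A + ((k₁ : ℂ) + k₂) • 1) (m + n - k₁ - k₂)) := by
  let Φ : ℕ → ℕ × ℕ → Mat := fun t k =>
    ((m.descFactorial k.1 * n.descFactorial k.2 : ℕ) : ℂ) •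
      mPoch (A + ((t + k.1 + k.2 : ℕ) : ℂ) • 1) (m + n - k.1 - k.2)
  have hΦ : ∀ t k, Φ (t + 1) k = Φ t k + Φ t (k + (1, 0)) + Φ t (k + (0, 1)) := by
    rintro t ⟨k₁, k₂⟩
    have hM : m + n - (k₁ + 1) - k₂ = m + n - k₁ - k₂ - 1 := by omega
    have hM' : m + n - k₁ - (k₂ + 1) = m + n - k₁ - k₂ - 1 := by omega
    have hX : A + ((t + k₁ + k₂ + 1 : ℕ) : ℂ) • 1 = A + ((t + k₁ + k₂ : ℕ) : ℂ) • 1 + 1 := by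
      push_cast; rw [add_smul, one_smul]; abel
    simp only [Φ, Prod.fst_add, Prod.snd_add, add_zero, hM, hM', ← add_assoc]
    rw [show t + 1 + k₁ + k₂ = t + k₁ + k₂ + 1 by omega,
      show t + k₁ + 1 + k₂ = t + k₁ + k₂ + 1 by omega, hX, mPoch_add_one]
    have hd := congrArg (Nat.cast : ℕ → ℂ)
      (Nat.descFactorial_succ_mul_add_mul_descFactorial_succ m n k₁ k₂)
    set Q := mPoch (A + ((t + k₁ + k₂ : ℕ) : ℂ) • 1 + 1) (m + n - k₁ - k₂ - 1)
    push_cast at hd ⊢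
    linear_combination (norm := module) -hd • Q
  have := eq_sum_choose_mul_choose_of_succ_eq Φ hΦ s
  simp only [Φ] at this
  convert this using 4 with k₁ _ k₂ _
  · simp
  · rw [Nat.cast_smul_eq_nsmul]
    simp

theorem mPoch_sub_natCast_smul_eq_sum (A : Mat) (s m n : ℕ) :
    mPoch (A - (s : ℂ) • 1) (m + n) =
      ∑ k₁ ∈ range (s + 1), ∑ k₂ ∈ range (s + 1 - k₁),
        ((-1) ^ (k₁ + k₂) * ((s.choose k₁ * (s - k₁).choose k₂ : ℕ) : ℂ)) •
          (((m.descFactorial k₁ * n.descFactorial k₂ : ℕ) : ℂ) • mPoch A (m + n - k₁ - k₂)) := by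
  let Φ : ℕ → ℕ × ℕ → Mat := fun t k =>
    ((-1) ^ (k.1 + k.2) * ((m.descFactorial k.1 * n.descFactorial k.2 : ℕ) : ℂ)) •
      mPoch (A - (t : ℂ) • 1) (m + n - k.1 - k.2)
  have hΦ : ∀ t k, Φ (t + 1) k = Φ t k + Φ t (k + (1, 0)) + Φ t (k + (0, 1)) := by
    rintro t ⟨k₁, k₂⟩
    have hM : m + n - (k₁ + 1) - k₂ = m + n - k₁ - k₂ - 1 := by omega
    have hM' : m + n - k₁ - (k₂ + 1) = m + n - k₁ - k₂ - 1 := by omega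
    have hY : A - (t : ℂ) • 1 = A - ((t + 1 : ℕ) : ℂ) • 1 + 1 := by
      push_cast; rw [add_smul, one_smul]; abel
    simp only [Φ, Prod.fst_add, Prod.snd_add, add_zero, hM, hM']
    rw [hY, mPoch_add_one]
    have hd := congrArg (Nat.cast : ℕ → ℂ)
      (Nat.descFactorial_succ_mul_add_mul_descFactorial_succ m n k₁ k₂)
    set Q := mPoch (A - ((t + 1 : ℕ) : ℂ) • 1 + 1) (m + n - k₁ - k₂ - 1)
    push_cast at hd ⊢
    linear_combination (norm := module) ((-1) ^ (k₁ + k₂) * hd) • Q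
  have := eq_sum_choose_mul_choose_of_succ_eq Φ hΦ s
  simp only [Φ] at this
  convert this using 4 with k₁ _ k₂ _
  · simp
  · rw [← Nat.cast_smul_eq_nsmul ℂ, smul_smul, smul_smul]
    simp only [Nat.cast_zero, zero_smul, sub_zero]
    ring_nf

section Summability

-- Any submultiplicative norm would do; this one induces the topology in which `appellF2` is summed.
attribute [local instance] Matrix.linftyOpNormedAddCommGroup Matrix.linftyOpNormedSpace
  Matrix.linftyOpNormedRing Matrix.linftyOpNormedAlgebra

theorem Matrix.linfty_opNorm_one_le : ‖(1 : Mat)‖ ≤ 1 := by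
  rw [← Matrix.diagonal_one, Matrix.linfty_opNorm_diagonal]
  exact (pi_norm_le_iff_of_nonneg zero_le_one).2 fun _ => by simp

theorem norm_add_natCast_smul_one_le (A : Mat) (j : ℕ) : ‖A + (j : ℂ) • 1‖ ≤ ‖A‖ + j := by
  refine (norm_add_le _ _).trans ?_
  rw [norm_smul, Complex.norm_natCast]
  gcongr
  exact mul_le_of_le_one_right j.cast_nonneg Matrix.linfty_opNorm_one_le

theorem norm_mPoch_le (A : Mat) (N : ℕ) : ‖mPoch A N‖ ≤ ∏ j ∈ range N, (‖A‖ + j) := by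
  induction N with
  | zero => simpa [mPoch] using Matrix.linfty_opNorm_one_le
  | succ N ih =>
    rw [mPoch, prod_range_succ]
    exact (norm_mul_le _ _).trans
      (mul_le_mul ih (norm_add_natCast_smul_one_le A N) (norm_nonneg _)
        (prod_nonneg fun j _ => by positivity))

theorem norm_inv_mPoch_le (C : Mat) (m : ℕ) :
    ‖(mPoch C m)⁻¹‖ ≤ ∏ j ∈ range m, ‖(C + (j : ℂ) • 1)⁻¹‖ := by
  induction m with
  | zero => simpa [mPoch] using Matrix.linfty_opNorm_one_le
  | succ m ih =>
    rw [mPoch, Matrix.mul_inv_rev, prod_range_succ, mul_comm (∏ j ∈ range m, _)]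
    exact (norm_mul_le _ _).trans (mul_le_mul_of_nonneg_left ih (norm_nonneg _))

/-- The inverse of `C + j` decays like `1 / j`. -/
theorem natCast_mul_norm_inv_le {C : Mat} {j : ℕ} (hu : IsUnit (C + (j : ℂ) • 1)) :
    j * ‖(C + (j : ℂ) • 1)⁻¹‖ ≤ 1 + ‖C‖ * ‖(C + (j : ℂ) • 1)⁻¹‖ := by
  set Y := (C + (j : ℂ) • 1)⁻¹
  have hY : (j : ℂ) • Y = 1 - C * Y := by
    rw [← Matrix.mul_nonsing_inv _ ((Matrix.isUnit_iff_isUnit_det _).1 hu), add_mul,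
      smul_mul_assoc, one_mul]
    abel
  calc (j : ℝ) * ‖Y‖ = ‖(j : ℂ) • Y‖ := by rw [norm_smul, Complex.norm_natCast]
    _ = ‖1 - C * Y‖ := by rw [hY]
    _ ≤ 1 + ‖C‖ * ‖Y‖ :=
      (norm_sub_le _ _).trans (add_le_add Matrix.linfty_opNorm_one_le (norm_mul_le _ _))

theorem eventually_add_mul_le {b c θ : ℝ} {g : ℕ → ℝ} (hg₀ : ∀ j, 0 ≤ g j)
    (hg : ∀ j : ℕ, j * g j ≤ 1 + c * g j) (hθ : 1 < θ) :
    ∀ᶠ j : ℕ in atTop, (b + j) * g j ≤ θ := by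
  filter_upwards [eventually_ge_atTop ⌈(b + θ * c) / (θ - 1)⌉₊] with j hj
  have hj' : b + j ≤ θ * (j - c) := by
    have := (Nat.ceil_le.1 hj)
    rw [div_le_iff₀ (by linarith)] at this
    linarith
  nlinarith [hg j, hg₀ j]

theorem exists_prod_range_le_mul_pow {c : ℕ → ℝ} {θ : ℝ} (hc : ∀ j, 0 ≤ c j) (hθ : 1 ≤ θ)
    (h : ∀ᶠ j in atTop, c j ≤ θ) : ∃ K ≥ 0, ∀ N, ∏ j ∈ range N, c j ≤ K * θ ^ N := by
  obtain ⟨J, hJ⟩ := eventually_atTop.1 h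
  refine ⟨∏ j ∈ range J, max (c j) 1, prod_nonneg fun j _ => zero_le_one.trans (le_max_right _ _),
    fun N => ?_⟩
  calc ∏ j ∈ range N, c j ≤ ∏ j ∈ range N, ((if j < J then max (c j) 1 else 1) * θ) := by
        refine prod_le_prod (fun j _ => hc j) fun j _ => ?_
        split_ifs with hj
        · exact (le_max_left _ _).trans (le_mul_of_one_le_right (by positivity) hθ)
        · simpa using hJ j (not_lt.1 hj)
    _ = (∏ j ∈ range N, (if j < J then max (c j) 1 else 1)) * θ ^ N := by
        rw [prod_mul_distrib, prod_const, card_range]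
    _ ≤ (∏ j ∈ range J, max (c j) 1) * θ ^ N := by
        refine mul_le_mul_of_nonneg_right ?_ (by positivity)
        rw [← prod_filter]
        refine prod_le_prod_of_subset_of_one_le (fun j hj => ?_)
          (fun j _ => zero_le_one.trans (le_max_right _ _)) fun j _ _ => le_max_right _ _
        simp only [mem_filter, mem_range] at hj ⊢
        exact hj.2

theorem exists_norm_mPoch_le (A : Mat) {θ : ℝ} (hθ : 1 < θ) :
    ∃ K ≥ 0, ∀ N, ‖mPoch A N‖ ≤ K * θ ^ N * N.factorial := by
  have hg : ∀ j : ℕ, j * ((j : ℝ) + 1)⁻¹ ≤ 1 + 0 * ((j : ℝ) + 1)⁻¹ := fun j => by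
    rw [zero_mul, add_zero, mul_inv_le_iff₀ (by positivity)]
    linarith
  obtain ⟨K, hK₀, hK⟩ := exists_prod_range_le_mul_pow (fun j => by positivity) hθ.le
    (eventually_add_mul_le (b := ‖A‖) (fun j => by positivity) hg hθ)
  refine ⟨K, hK₀, fun N => (norm_mPoch_le A N).trans ?_⟩
  calc ∏ j ∈ range N, (‖A‖ + j)
      = (∏ j ∈ range N, (‖A‖ + j) * ((j : ℝ) + 1)⁻¹) * ∏ j ∈ range N, ((j : ℝ) + 1) := by
        rw [← prod_mul_distrib]
        exact prod_congr rfl fun j _ => by field_simp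
    _ ≤ K * θ ^ N * N.factorial := by
        rw [← prod_range_add_one_eq_factorial]
        push_cast
        exact mul_le_mul_of_nonneg_right (hK N) (prod_nonneg fun j _ => by positivity)

theorem exists_norm_mPoch_mul_norm_inv_mPoch_le (B : Mat) {C : Mat}
    (hC : ∀ n : ℕ, IsUnit (C + (n : ℂ) • 1)) {θ : ℝ} (hθ : 1 < θ) :
    ∃ K ≥ 0, ∀ m, ‖mPoch B m‖ * ‖(mPoch C m)⁻¹‖ ≤ K * θ ^ m := by
  obtain ⟨K, hK₀, hK⟩ := exists_prod_range_le_mul_pow (fun j => by positivity) hθ.le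
    (eventually_add_mul_le (b := ‖B‖) (fun j => norm_nonneg _)
      (fun j => natCast_mul_norm_inv_le (hC j)) hθ)
  refine ⟨K, hK₀, fun m => le_trans ?_ (hK m)⟩
  rw [prod_mul_distrib]
  exact mul_le_mul (norm_mPoch_le B m) (norm_inv_mPoch_le C m) (norm_nonneg _)
    (prod_nonneg fun j _ => by positivity)

theorem choose_mul_pow_mul_pow_le_add_pow {a b : ℝ} (ha : 0 ≤ a) (hb : 0 ≤ b) (m n : ℕ) :
    (m + n).choose m * a ^ m * b ^ n ≤ (a + b) ^ (m + n) := by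
  rw [add_pow]
  calc (m + n).choose m * a ^ m * b ^ n = a ^ m * b ^ (m + n - m) * (m + n).choose m := by
        rw [Nat.add_sub_cancel_left]; ring
    _ ≤ _ := single_le_sum (f := fun k => a ^ k * b ^ (m + n - k) * (m + n).choose k)
        (fun k _ => by positivity) (mem_range.2 (Nat.lt_succ_of_le (Nat.le_add_right m n)))

theorem exists_one_lt_sq_mul_lt_one {u : ℝ} (hu₀ : 0 ≤ u) (hu : u < 1) :
    ∃ θ : ℝ, 1 < θ ∧ θ ^ 2 * u < 1 := by
  refine ⟨√(2 / (1 + u)), ?_, ?_⟩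
  · rw [Real.lt_sqrt zero_le_one, one_pow, lt_div_iff₀ (by positivity)]
    linarith
  · rw [Real.sq_sqrt (by positivity), div_mul_eq_mul_div, div_lt_one (by positivity)]
    linarith

theorem norm_appellF2Term_le (A B B' C C' : Mat) (x y : ℂ) (m n : ℕ) :
    ‖appellF2Term A B B' C C' x y (m, n)‖ ≤
      ((m.factorial : ℝ) * n.factorial)⁻¹ * ‖x‖ ^ m * ‖y‖ ^ n *
        (‖mPoch A (m + n)‖ * (‖mPoch B m‖ * ‖(mPoch C m)⁻¹‖) *
          (‖mPoch B' n‖ * ‖(mPoch C' n)⁻¹‖)) := by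
  rw [appellF2Term, norm_smul]
  simp only [norm_mul, norm_inv, norm_pow, Complex.norm_natCast]
  gcongr
  calc _ ≤ ‖mPoch A (m + n)‖ * ‖mPoch B m‖ * ‖mPoch B' n‖ * ‖(mPoch C m)⁻¹‖ *
        ‖(mPoch C' n)⁻¹‖ := by
        refine (norm_mul_le _ _).trans (mul_le_mul_of_nonneg_right ?_ (norm_nonneg _))
        refine (norm_mul_le _ _).trans (mul_le_mul_of_nonneg_right ?_ (norm_nonneg _))
        exact (norm_mul_le _ _).trans
          (mul_le_mul_of_nonneg_right (norm_mul_le _ _) (norm_nonneg _))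
    _ = _ := by ring

theorem summable_appellF2Term (A B B' : Mat) {C C' : Mat} {x y : ℂ}
    (hC : ∀ n : ℕ, IsUnit (C + (n : ℂ) • 1)) (hC' : ∀ n : ℕ, IsUnit (C' + (n : ℂ) • 1))
    (hxy : ‖x‖ + ‖y‖ < 1) :
    Summable (appellF2Term A B B' C C' x y) := by
  obtain ⟨θ, hθ, hθu⟩ := exists_one_lt_sq_mul_lt_one (by positivity) hxy
  obtain ⟨K₁, hK₁₀, hK₁⟩ := exists_norm_mPoch_le A hθ
  obtain ⟨K₂, hK₂₀, hK₂⟩ := exists_norm_mPoch_mul_norm_inv_mPoch_le B hC hθ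
  obtain ⟨K₃, hK₃₀, hK₃⟩ := exists_norm_mPoch_mul_norm_inv_mPoch_le B' hC' hθ
  set v := θ ^ 2 * (‖x‖ + ‖y‖) with hv_def
  have hv : Summable fun p : ℕ × ℕ => v ^ p.1 * v ^ p.2 := by
    have := summable_geometric_of_lt_one (by positivity) hθu
    exact this.mul_of_nonneg this (fun _ => by positivity) fun _ => by positivity
  refine Summable.of_norm_bounded (hv.mul_left (K₁ * K₂ * K₃)) fun ⟨m, n⟩ => ?_
  have hfact : ((m + n).factorial : ℝ) = (m + n).choose m * m.factorial * n.factorial := by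
    have := Nat.choose_mul_factorial_mul_factorial (Nat.le_add_right m n)
    rw [Nat.add_sub_cancel_left] at this
    exact_mod_cast this.symm
  calc ‖appellF2Term A B B' C C' x y (m, n)‖
      ≤ ((m.factorial : ℝ) * n.factorial)⁻¹ * ‖x‖ ^ m * ‖y‖ ^ n *
          (K₁ * θ ^ (m + n) * (m + n).factorial * (K₂ * θ ^ m) * (K₃ * θ ^ n)) := by
        refine (norm_appellF2Term_le A B B' C C' x y m n).trans ?_
        gcongr _ * (?_ * ?_ * ?_)
        exacts [hK₁ _, hK₂ m, hK₃ n]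
    _ = K₁ * K₂ * K₃ * ((m + n).choose m * ‖x‖ ^ m * ‖y‖ ^ n) * (θ ^ 2) ^ (m + n) := by
        rw [hfact]
        field_simp
        ring
    _ ≤ K₁ * K₂ * K₃ * (‖x‖ + ‖y‖) ^ (m + n) * (θ ^ 2) ^ (m + n) := by
        gcongr
        exact choose_mul_pow_mul_pow_le_add_pow (norm_nonneg x) (norm_nonneg y) m n
    _ = K₁ * K₂ * K₃ * (v ^ m * v ^ n) := by
        rw [← pow_add, hv_def, mul_pow]
        ring

end Summability

theorem mPoch_mul_shifted_mul_inv_mPoch {X B B' C C' : Mat} (hXB : Commute X B)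
    (hB'C : Commute B' C) (hB'C' : Commute B' C') (hCC' : Commute C C')
    (hC : ∀ n : ℕ, IsUnit (C + (n : ℂ) • 1)) (hC' : ∀ n : ℕ, IsUnit (C' + (n : ℂ) • 1))
    (k₁ k₂ m n : ℕ) :
    mPoch B k₁ * (X * mPoch (B + (k₁ : ℂ) • 1) m * mPoch (B' + (k₂ : ℂ) • 1) n *
        (mPoch (C + (k₁ : ℂ) • 1) m)⁻¹ * (mPoch (C' + (k₂ : ℂ) • 1) n)⁻¹) *
      mPoch B' k₂ * (mPoch C k₁)⁻¹ * (mPoch C' k₂)⁻¹ =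
    X * mPoch B (k₁ + m) * mPoch B' (k₂ + n) * (mPoch C (k₁ + m))⁻¹ *
      (mPoch C' (k₂ + n))⁻¹ := by
  have hCm := isUnit_mPoch (isUnit_add_natCast_smul_one hC k₁) m
  have hC'n := isUnit_mPoch (isUnit_add_natCast_smul_one hC' k₂) n
  have h₁ : Commute (mPoch B k₁) X := (hXB.mPoch_right k₁).symm
  have h₂ : Commute (mPoch (C' + (k₂ : ℂ) • 1) n)⁻¹ (mPoch B' k₂) :=
    ((hB'C'.add_smul_one_right _).mPoch_mPoch k₂ n).inv_right_of_isUnit hC'n |>.symm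
  have h₃ : Commute (mPoch (C + (k₁ : ℂ) • 1) m)⁻¹ (mPoch B' k₂) :=
    ((hB'C.add_smul_one_right _).mPoch_mPoch k₂ m).inv_right_of_isUnit hCm |>.symm
  have h₄ : Commute (mPoch (B' + (k₂ : ℂ) • 1) n) (mPoch B' k₂) :=
    ((Commute.refl B').add_smul_one_right _).mPoch_mPoch k₂ n |>.symm
  have h₅ : Commute (mPoch (C' + (k₂ : ℂ) • 1) n)⁻¹ (mPoch C k₁)⁻¹ :=
    ((((hCC'.add_smul_one_right _).mPoch_mPoch k₁ n).inv_right_of_isUnit hC'n).symm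
      |>.inv_right_of_isUnit (isUnit_mPoch hC k₁))
  rw [mPoch_add B, mPoch_add B', mPoch_add C, mPoch_add C', Matrix.mul_inv_rev,
    Matrix.mul_inv_rev]
  simp only [mul_assoc]
  rw [h₁.left_comm, h₂.left_comm, h₃.left_comm, h₄.left_comm, h₅.left_comm]

theorem natCast_descFactorial_mul_inv_factorial (k q : ℕ) :
    ((k + q).descFactorial k : ℂ) * ((k + q).factorial : ℂ)⁻¹ = (q.factorial : ℂ)⁻¹ := by
  have h := Nat.factorial_mul_descFactorial (Nat.le_add_right k q)
  rw [Nat.add_sub_cancel_left] at h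
  have hd : ((k + q).descFactorial k : ℂ) ≠ 0 := by
    exact_mod_cast mt Nat.descFactorial_eq_zero_iff_lt.1 (by omega)
  rw [← h]
  push_cast
  field_simp

theorem hasSum_appellF2DiffTerm {A B B' C C' : Mat} {x y : ℂ} (hAB : Commute A B)
    (hB'C : Commute B' C) (hB'C' : Commute B' C') (hCC' : Commute C C')
    (hC : ∀ n : ℕ, IsUnit (C + (n : ℂ) • 1)) (hC' : ∀ n : ℕ, IsUnit (C' + (n : ℂ) • 1))
    (hxy : ‖x‖ + ‖y‖ < 1) (k₁ k₂ : ℕ) :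
    HasSum (appellF2DiffTerm A B B' C C' x y k₁ k₂)
      ((x ^ k₁ * y ^ k₂) • (mPoch B k₁ *
        appellF2 A (B + (k₁ : ℂ) • 1) (B' + (k₂ : ℂ) • 1) (C + (k₁ : ℂ) • 1) (C' + (k₂ : ℂ) • 1)
          x y * mPoch B' k₂ * (mPoch C k₁)⁻¹ * (mPoch C' k₂)⁻¹)) := by
  have hinj : Function.Injective fun q : ℕ × ℕ => (k₁ + q.1, k₂ + q.2) := fun p q h => by
    simp only [Prod.mk.injEq] at h
    ext <;> omega
  rw [← hinj.hasSum_iff]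
  · have := ((((summable_appellF2Term A (B + (k₁ : ℂ) • 1) (B' + (k₂ : ℂ) • 1)
      (isUnit_add_natCast_smul_one hC k₁) (isUnit_add_natCast_smul_one hC' k₂) hxy).hasSum.mul_left
      (mPoch B k₁)).mul_right (mPoch B' k₂)).mul_right (mPoch C k₁)⁻¹).mul_right
      (mPoch C' k₂)⁻¹ |>.const_smul (x ^ k₁ * y ^ k₂)
    refine this.congr_fun fun ⟨m, n⟩ => ?_
    simp only [Function.comp_apply, appellF2Term, appellF2DiffTerm, mul_smul_comm, smul_mul_assoc,
      smul_smul]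
    rw [mPoch_mul_shifted_mul_inv_mPoch ((hAB.symm.mPoch_right _).symm) hB'C hB'C' hCC' hC hC',
      show k₁ + m + (k₂ + n) - k₁ - k₂ = m + n by omega]
    congr 1
    rw [mul_inv, mul_inv (m.factorial : ℂ), ← natCast_descFactorial_mul_inv_factorial k₁ m,
      ← natCast_descFactorial_mul_inv_factorial k₂ n]
    push_cast
    ring
  · rintro ⟨m, n⟩ hmn
    have : m < k₁ ∨ n < k₂ := by
      by_contra! h
      exact hmn ⟨(m - k₁, n - k₂), by simp only [Prod.mk.injEq]; omega⟩
    rcases this with h | h <;> simp [appellF2DiffTerm, Nat.descFactorial_eq_zero_iff_lt.2 h]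

theorem appellF2_eq_sum_of_mPoch_eq_sum {A₀ B B' C C' : Mat} {x y : ℂ} (s : ℕ)
    (A' : ℕ → ℕ → Mat) (w : ℕ → ℕ → ℂ) (hA'B : ∀ k₁ k₂, Commute (A' k₁ k₂) B)
    (hB'C : Commute B' C) (hB'C' : Commute B' C') (hCC' : Commute C C')
    (hC : ∀ n : ℕ, IsUnit (C + (n : ℂ) • 1)) (hC' : ∀ n : ℕ, IsUnit (C' + (n : ℂ) • 1))
    (hxy : ‖x‖ + ‖y‖ < 1)
    (hA₀ : ∀ m n, mPoch A₀ (m + n) = ∑ k₁ ∈ range (s + 1), ∑ k₂ ∈ range (s + 1 - k₁),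
      w k₁ k₂ • (((m.descFactorial k₁ * n.descFactorial k₂ : ℕ) : ℂ) •
        mPoch (A' k₁ k₂) (m + n - k₁ - k₂))) :
    appellF2 A₀ B B' C C' x y = ∑ k₁ ∈ range (s + 1), ∑ k₂ ∈ range (s + 1 - k₁),
      (w k₁ k₂ * x ^ k₁ * y ^ k₂) • (mPoch B k₁ *
        appellF2 (A' k₁ k₂) (B + (k₁ : ℂ) • 1) (B' + (k₂ : ℂ) • 1) (C + (k₁ : ℂ) • 1)
          (C' + (k₂ : ℂ) • 1) x y * mPoch B' k₂ * (mPoch C k₁)⁻¹ * (mPoch C' k₂)⁻¹) := by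
  have hterm : appellF2Term A₀ B B' C C' x y = fun q =>
      ∑ k₁ ∈ range (s + 1), ∑ k₂ ∈ range (s + 1 - k₁),
        w k₁ k₂ • appellF2DiffTerm (A' k₁ k₂) B B' C C' x y k₁ k₂ q := by
    funext q
    simp only [appellF2Term, appellF2DiffTerm, hA₀, sum_mul, smul_sum, smul_mul_assoc, smul_smul]
    refine sum_congr rfl fun k₁ _ => sum_congr rfl fun k₂ _ => ?_
    ring_nf
  show ∑' q, appellF2Term A₀ B B' C C' x y q = _
  rw [hterm]
  refine HasSum.tsum_eq <| hasSum_sum fun k₁ _ => hasSum_sum fun k₂ _ => ?_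
  convert (hasSum_appellF2DiffTerm (hA'B k₁ k₂) hB'C hB'C' hCC' hC hC' hxy k₁ k₂).const_smul
    (w k₁ k₂) using 1
  rw [smul_smul, mul_assoc, mul_assoc]

theorem appellF2_add_natCast_smul_one {A B B' C C' : Mat} {x y : ℂ}
    (hC : ∀ n : ℕ, IsUnit (C + (n : ℂ) • 1)) (hC' : ∀ n : ℕ, IsUnit (C' + (n : ℂ) • 1))
    (hAB : Commute A B) (hB'C : Commute B' C) (hB'C' : Commute B' C')
    (hCC' : Commute C C') (hxy : ‖x‖ + ‖y‖ < 1) (s : ℕ) :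
    appellF2 (A + (s : ℂ) • 1) B B' C C' x y =
      ∑ k₁ ∈ range (s + 1), ∑ k₂ ∈ range (s + 1 - k₁),
        (((s.factorial : ℂ) /
            ((k₁.factorial : ℂ) * (k₂.factorial : ℂ) * ((s - k₁ - k₂).factorial : ℂ))) *
          x ^ k₁ * y ^ k₂) •
          (mPoch B k₁ *
            appellF2 (A + ((k₁ : ℂ) + (k₂ : ℂ)) • 1) (B + (k₁ : ℂ) • 1)
              (B' + (k₂ : ℂ) • 1) (C + (k₁ : ℂ) • 1) (C' + (k₂ : ℂ) • 1) x y *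
            mPoch B' k₂ * (mPoch C k₁)⁻¹ * (mPoch C' k₂)⁻¹) := by
  rw [appellF2_eq_sum_of_mPoch_eq_sum s _ _ (fun _ _ => (hAB.symm.add_smul_one_right _).symm)
    hB'C hB'C' hCC' hC hC' hxy (mPoch_add_natCast_smul_eq_sum A s)]
  refine sum_congr rfl fun k₁ hk₁ => sum_congr rfl fun k₂ hk₂ => ?_
  rw [Nat.cast_choose_mul_choose_eq_div (add_le_of_mem_range_of_mem_range_sub hk₁ hk₂)]

theorem appellF2_sub_natCast_smul_one {A B B' C C' : Mat} {x y : ℂ}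
    (hC : ∀ n : ℕ, IsUnit (C + (n : ℂ) • 1)) (hC' : ∀ n : ℕ, IsUnit (C' + (n : ℂ) • 1))
    (hAB : Commute A B) (hB'C : Commute B' C) (hB'C' : Commute B' C')
    (hCC' : Commute C C') (hxy : ‖x‖ + ‖y‖ < 1) (s : ℕ) :
    appellF2 (A - (s : ℂ) • 1) B B' C C' x y =
      ∑ k₁ ∈ range (s + 1), ∑ k₂ ∈ range (s + 1 - k₁),
        (((s.factorial : ℂ) /
            ((k₁.factorial : ℂ) * (k₂.factorial : ℂ) * ((s - k₁ - k₂).factorial : ℂ))) *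
          (-x) ^ k₁ * (-y) ^ k₂) •
          (mPoch B k₁ *
            appellF2 A (B + (k₁ : ℂ) • 1) (B' + (k₂ : ℂ) • 1)
              (C + (k₁ : ℂ) • 1) (C' + (k₂ : ℂ) • 1) x y *
            mPoch B' k₂ * (mPoch C k₁)⁻¹ * (mPoch C' k₂)⁻¹) := by
  rw [appellF2_eq_sum_of_mPoch_eq_sum s _ _ (fun _ _ => hAB) hB'C hB'C' hCC' hC hC' hxy
    (mPoch_sub_natCast_smul_eq_sum A s)]
  refine sum_congr rfl fun k₁ hk₁ => sum_congr rfl fun k₂ hk₂ => ?_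
  rw [← Nat.cast_choose_mul_choose_eq_div (add_le_of_mem_range_of_mem_range_sub hk₁ hk₂), neg_pow,
    neg_pow, pow_add]
  ring_nf

end

theorem appellF2_recursion_A_multinom {r : ℕ} (A B B' C C' : Matrix (Fin r) (Fin r) ℂ) (x y : ℂ)
    (hC : ∀ n : ℕ, IsUnit (C + (n : ℂ) • (1 : Matrix (Fin r) (Fin r) ℂ)))
    (hC' : ∀ n : ℕ, IsUnit (C' + (n : ℂ) • (1 : Matrix (Fin r) (Fin r) ℂ)))
    (hAB : A * B = B * A)
    (hB'C : B' * C = C * B') (hB'C' : B' * C' = C' * B') (hCC' : C * C' = C' * C)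
    (hxy : ‖x‖ + ‖y‖ < 1) :
    ((∀ k : ℕ, IsUnit (A + (k : ℂ) • (1 : Matrix (Fin r) (Fin r) ℂ))) →
      ∀ s : ℕ,
        appellF2 (A + (s : ℂ) • 1) B B' C C' x y =
          ∑ k₁ ∈ Finset.range (s + 1), ∑ k₂ ∈ Finset.range (s + 1 - k₁),
            (((s.factorial : ℂ) /
                ((k₁.factorial : ℂ) * (k₂.factorial : ℂ) * ((s - k₁ - k₂).factorial : ℂ))) *
              x ^ k₁ * y ^ k₂) •
              (mPoch B k₁ *
                appellF2 (A + ((k₁ : ℂ) + (k₂ : ℂ)) • 1) (B + (k₁ : ℂ) • 1)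
                  (B' + (k₂ : ℂ) • 1) (C + (k₁ : ℂ) • 1) (C' + (k₂ : ℂ) • 1) x y *
                mPoch B' k₂ * (mPoch C k₁)⁻¹ * (mPoch C' k₂)⁻¹)) ∧
    ((∀ k : ℕ, IsUnit (A + (k : ℂ) • (1 : Matrix (Fin r) (Fin r) ℂ))) →
      ∀ s : ℕ,
        (∀ k : ℕ, 1 ≤ k → k ≤ s → IsUnit (A - (k : ℂ) • (1 : Matrix (Fin r) (Fin r) ℂ))) →
        appellF2 (A - (s : ℂ) • 1) B B' C C' x y =
          ∑ k₁ ∈ Finset.range (s + 1), ∑ k₂ ∈ Finset.range (s + 1 - k₁),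
            (((s.factorial : ℂ) /
                ((k₁.factorial : ℂ) * (k₂.factorial : ℂ) * ((s - k₁ - k₂).factorial : ℂ))) *
              (-x) ^ k₁ * (-y) ^ k₂) •
              (mPoch B k₁ *
                appellF2 A (B + (k₁ : ℂ) • 1) (B' + (k₂ : ℂ) • 1)
                  (C + (k₁ : ℂ) • 1) (C' + (k₂ : ℂ) • 1) x y *
                mPoch B' k₂ * (mPoch C k₁)⁻¹ * (mPoch C' k₂)⁻¹)) :=
  ⟨fun _ => appellF2_add_natCast_smul_one hC hC' hAB hB'C hB'C' hCC' hxy,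
    fun _ s _ => appellF2_sub_natCast_smul_one hC hC' hAB hB'C hB'C' hCC' hxy s⟩
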